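/- arXiv:2005.13715 — 4 statements merged into one kernel-verified Lean document; each statement's English description precedes it below -/
import Mathlib

section
/- Let d be a metric on 𝔽_q^n that is invariant under translations, let D ≥ 0 be an integer, and set A*_d(D) = max{|A| : A ⊆ 𝔽_q^n and d(x, y) ≤ D for all x, y ∈ A}. If C ⊆ 𝔽_q^n is a code such that d(x, y) ≥ D + 1 for all distinct x, y ∈ C, then A*_d(D) · |C| ≤ q^n. -/
set_option linter.unusedSectionVars false

open scoped Classical

noncomputable section

variable {F : Type*} [Field F] [Fintype F]

def IsWeight (w : F → ℕ) : Prop :=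
  (∀ a : F, w a = 0 ↔ a = 0) ∧ (∀ a : F, w (-a) = w a) ∧
    (∀ a b : F, w (a + b) ≤ w a + w b)

def Mw (w : F → ℕ) : ℕ := Finset.univ.sup w

def mw (w : F → ℕ) : ℕ := sInf {s | ∃ a : F, a ≠ 0 ∧ w a = s}

def rho {n : ℕ} (u : Fin n → F) : ℕ :=
  (Finset.univ.filter fun j => u j ≠ 0).sup fun j => (j : ℕ) + 1

lemma rho_le {n : ℕ} (u : Fin n → F) : rho u ≤ n :=
  Finset.sup_le fun j _ => j.isLt

def chainWeight {n : ℕ} (w : F → ℕ) (u : Fin n → F) : ℕ :=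
  if h : rho u = 0 then 0
  else w (u ⟨rho u - 1,
        lt_of_lt_of_le (Nat.sub_lt (Nat.pos_of_ne_zero h) Nat.one_pos) (rho_le u)⟩)
      + (rho u - 1) * Mw w

def dChain {n : ℕ} (w : F → ℕ) (u v : Fin n → F) : ℕ := chainWeight w (u - v)

def ballW {n : ℕ} (w : F → ℕ) (x : Fin n → F) (r : ℕ) : Finset (Fin n → F) :=
  Finset.univ.filter fun v => dChain w x v ≤ r

def diamW {n : ℕ} (w : F → ℕ) (A : Finset (Fin n → F)) : ℕ :=
  (A ×ˢ A).sup fun p => dChain w p.1 p.2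

def AstarW (w : F → ℕ) (n D : ℕ) : ℕ :=
  Finset.univ.sup fun A : Finset (Fin n → F) => if diamW w A ≤ D then A.card else 0

def winv (w : F → ℕ) (S : ℕ) : Finset F :=
  Finset.univ.filter fun a => a ≠ 0 ∧ w a ≤ S

def dP {n : ℕ} (C : Finset (Fin n → F)) : ℕ :=
  sInf {s | ∃ x ∈ C, ∃ y ∈ C, x ≠ y ∧ rho (x - y) = s}

def dW {n : ℕ} (w : F → ℕ) (C : Finset (Fin n → F)) : ℕ :=
  sInf {s | ∃ x ∈ C, ∃ y ∈ C, x ≠ y ∧ dChain w x y = s}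

def floorW (w : F → ℕ) (n D : ℕ) : ℕ :=
  (Finset.univ.filter fun u : Fin n → F => chainWeight w u < D).sup (chainWeight w)

def nonArch (w : F → ℕ) : Prop := ∀ a b : F, w (a + b) ≤ max (w a) (w b)

def Sw (w : F → ℕ) : ℕ :=
  if nonArch w then Mw w
  else sInf {s | ∃ a b : F, max (w a) (w b) < w (a - b) ∧ max (w a) (w b) = s}

def WwCond (w : F → ℕ) (S : ℕ) (K : Finset F) : Prop :=
  (∀ a ∈ K, Sw w ≤ w a ∧ w a ≤ S) ∧
  (∀ a ∈ K, ∀ b : F, w b ≤ Sw w - 1 → w (a - b) ≤ S) ∧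
  (∀ a ∈ K, ∀ b ∈ K, w (a - b) ≤ S)

def WwCard (w : F → ℕ) (S : ℕ) : ℕ :=
  Finset.univ.sup fun K : Finset F => if WwCond w S K then K.card else 0

def idealOf {n : ℕ} (P : PartialOrder (Fin n)) (u : Fin n → F) : Finset (Fin n) :=
  Finset.univ.filter fun j => ∃ i : Fin n, u i ≠ 0 ∧ P.le j i

def maxOf {n : ℕ} (P : PartialOrder (Fin n)) (u : Fin n → F) : Finset (Fin n) :=
  (idealOf P u).filter fun j => ∀ k ∈ idealOf P u, P.le j k → j = k

def posetWeight {n : ℕ} (P : PartialOrder (Fin n)) (w : F → ℕ) (u : Fin n → F) : ℕ :=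
  (∑ i ∈ maxOf P u, w (u i)) + Mw w * ((idealOf P u) \ (maxOf P u)).card

def dPoset {n : ℕ} (P : PartialOrder (Fin n)) (w : F → ℕ) (u v : Fin n → F) : ℕ :=
  posetWeight P w (u - v)

def ballP {n : ℕ} (P : PartialOrder (Fin n)) (w : F → ℕ) (x : Fin n → F) (r : ℕ) :
    Finset (Fin n → F) :=
  Finset.univ.filter fun v => dPoset P w x v ≤ r

def diamP {n : ℕ} (P : PartialOrder (Fin n)) (w : F → ℕ) (A : Finset (Fin n → F)) : ℕ :=
  (A ×ˢ A).sup fun p => dPoset P w p.1 p.2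

end

noncomputable def AstarGen {F : Type*} [Field F] [Fintype F] {n : ℕ}
    (d : (Fin n → F) → (Fin n → F) → ℝ) (D : ℕ) : ℕ :=
  Finset.univ.sup fun A : Finset (Fin n → F) =>
    if ∀ x ∈ A, ∀ y ∈ A, d x y ≤ (D : ℝ) then A.card else 0

theorem stmt1 {F : Type*} [Field F] [Fintype F] {n : ℕ} (hn : 1 ≤ n)
    (d : (Fin n → F) → (Fin n → F) → ℝ)
    (hsymm : ∀ x y : Fin n → F, d x y = d y x)
    (htri : ∀ x y z : Fin n → F, d x z ≤ d x y + d y z)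
    (heq : ∀ x y : Fin n → F, d x y = 0 ↔ x = y)
    (hinv : ∀ x y z : Fin n → F, d (x + z) (y + z) = d x y)
    (D : ℕ) (C : Finset (Fin n → F))
    (hC : ∀ x ∈ C, ∀ y ∈ C, x ≠ y → (D : ℝ) + 1 ≤ d x y) :
    AstarGen d D * C.card ≤ Fintype.card F ^ n := by
  classical
  -- invariance consequence: d x y = d (x - y) 0
  have hshift : ∀ x y : Fin n → F, d x y = d (x - y) 0 := by
    intro x y
    have := hinv x y (-y)
    simpa [sub_eq_add_neg] using this.symm
  obtain ⟨A, -, hA⟩ := Finset.exists_mem_eq_sup (Finset.univ : Finset (Finset (Fin n → F)))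
    ⟨∅, Finset.mem_univ ∅⟩
    (fun A : Finset (Fin n → F) => if ∀ x ∈ A, ∀ y ∈ A, d x y ≤ (D : ℝ) then A.card else 0)
  rw [AstarGen, hA]
  by_cases hcond : ∀ x ∈ A, ∀ y ∈ A, d x y ≤ (D : ℝ)
  · rw [if_pos hcond]
    have key : (A ×ˢ C).card ≤ Fintype.card (Fin n → F) := by
      rw [← Finset.card_univ]
      apply Finset.card_le_card_of_injOn (fun p => p.1 + p.2)
      · intro p _; exact Finset.mem_univ _
      · rintro ⟨a1, c1⟩ hp1 ⟨a2, c2⟩ hp2 h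
        simp only [Finset.mem_coe, Finset.mem_product] at hp1 hp2
        simp only at h
        have hcc : c1 = c2 := by
          by_contra hne
          have h1 := hC c1 hp1.2 c2 hp2.2 hne
          have h2 := hcond a2 hp2.1 a1 hp1.1
          have heqd : d c1 c2 = d a2 a1 := by
            rw [hshift c1 c2, hshift a2 a1]
            congr 1
            have hc : c1 - c2 = a2 - a1 := by linear_combination h
            rw [hc]
          have : (D : ℝ) + 1 ≤ (D : ℝ) := heqd ▸ h1 |>.trans h2
          linarith
        subst hcc
        have : a1 = a2 := by
          have := h
          exact add_right_cancel this
        simp [this]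
    have : (A ×ˢ C).card = A.card * C.card := Finset.card_product A C
    rw [this] at key
    calc A.card * C.card ≤ Fintype.card (Fin n → F) := key
      _ = Fintype.card F ^ n := by simp
  · rw [if_neg hcond]
    simp
end

section
/- Let D = S + R·M_w with integers 0 ≤ S < M_w and R ≥ 0, and let x ∈ 𝔽_q^n. If S > 0 and R ≤ n − 1, then |B_w(x, D)| = q^R · (1 + |w⁻¹([S]_w)|). If S = 0 and R ≤ n, then |B_w(x, D)| = q^R. -/
set_option linter.unusedSectionVars false

open scoped Classical

/-!
The chain weight of `u ≠ 0` is `w (u t) + t * M_w`, where `t` is the last nonzero coordinate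
(counted from `0`). Since `0 < w (u t) ≤ M_w` and `S < M_w`, the pair `(t, w (u t))` is compared
lexicographically with `(R, S)`: the ball of radius `S + R * M_w` around `0` consists of the
vectors whose coordinates below `R` are arbitrary, whose coordinate `R` has weight at most `S`,
and whose later coordinates vanish. It is a product set, of size `q ^ R * |{a | w a ≤ S}|`, and
translation moves it onto the ball around any `x`.
-/

open Finset

lemma add_mul_le_add_mul_iff {a t S R M : ℕ} (hS : S < M) (ha : 0 < a) (haM : a ≤ M) :
    a + t * M ≤ S + R * M ↔ t < R ∨ t = R ∧ a ≤ S := by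
  rcases lt_trichotomy t R with h | rfl | h
  · have : (t + 1) * M ≤ R * M := Nat.mul_le_mul_right _ h
    simp only [h, true_or, iff_true]
    nlinarith
  · simp
  · have : (R + 1) * M ≤ t * M := Nat.mul_le_mul_right _ h
    simp only [h.ne', h.not_gt, false_or, false_and, iff_false, not_le]
    nlinarith

section ChainBall

variable {F : Type*} [Field F] [Fintype F]

lemma IsWeight.map_zero {w : F → ℕ} (hw : IsWeight w) : w 0 = 0 :=
  (hw.1 0).2 rfl

lemma IsWeight.pos {w : F → ℕ} (hw : IsWeight w) {a : F} (ha : a ≠ 0) : 0 < w a :=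
  Nat.pos_of_ne_zero fun h => ha ((hw.1 a).1 h)

lemma le_Mw (w : F → ℕ) (a : F) : w a ≤ Mw w :=
  le_sup (mem_univ a)

lemma lt_rho_of_ne_zero {n : ℕ} {u : Fin n → F} {j : Fin n} (h : u j ≠ 0) :
    (j : ℕ) < rho u :=
  Nat.lt_of_succ_le <|
    le_sup (f := fun j : Fin n => (j : ℕ) + 1) (mem_filter.mpr ⟨mem_univ _, h⟩)

lemma eq_zero_of_rho_le {n : ℕ} {u : Fin n → F} {j : Fin n} (h : rho u ≤ j) : u j = 0 :=
  not_not.mp fun hj => (lt_rho_of_ne_zero hj).not_ge h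

lemma exists_succ_eq_rho {n : ℕ} {u : Fin n → F} (h : rho u ≠ 0) :
    ∃ t : Fin n, u t ≠ 0 ∧ (t : ℕ) + 1 = rho u := by
  have hne : (univ.filter fun j : Fin n => u j ≠ 0).Nonempty := by
    by_contra hc
    exact h (by simp [rho, not_nonempty_iff_eq_empty.mp hc])
  obtain ⟨t, ht, hsup⟩ := exists_mem_eq_sup _ hne fun j : Fin n => (j : ℕ) + 1
  exact ⟨t, (mem_filter.mp ht).2, hsup.symm⟩

lemma chainWeight_eq_of_rho_eq_succ {n : ℕ} (w : F → ℕ) {u : Fin n → F} {t : Fin n}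
    (ht : (t : ℕ) + 1 = rho u) : chainWeight w u = w (u t) + t * Mw w := by
  have hρ : rho u ≠ 0 := by omega
  have htop : (⟨rho u - 1, by omega⟩ : Fin n) = t := Fin.ext (by simp; omega)
  rw [chainWeight, dif_neg hρ, htop, show rho u - 1 = t by omega]

lemma chainWeight_le_iff {n : ℕ} {w : F → ℕ} (hw : IsWeight w) {S : ℕ} (hS : S < Mw w)
    (R : ℕ) (u : Fin n → F) :
    chainWeight w u ≤ S + R * Mw w ↔
      (∀ j : Fin n, R < j → u j = 0) ∧ (∀ j : Fin n, (j : ℕ) = R → w (u j) ≤ S) := by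
  by_cases hρ : rho u = 0
  · have hu : ∀ j : Fin n, u j = 0 := fun j => eq_zero_of_rho_le (by omega)
    simp [chainWeight, hρ, hu, hw.map_zero]
  obtain ⟨t, ht0, ht⟩ := exists_succ_eq_rho hρ
  have hzero : ∀ j : Fin n, t < j → u j = 0 := fun j hj => eq_zero_of_rho_le (by omega)
  rw [chainWeight_eq_of_rho_eq_succ w ht, add_mul_le_add_mul_iff hS (hw.pos ht0) (le_Mw w _)]
  constructor
  · rintro (htR | ⟨rfl, hle⟩)
    · refine ⟨fun j hj => hzero j (by omega), fun j hj => ?_⟩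
      rw [hzero j (by omega), hw.map_zero]
      exact Nat.zero_le S
    · refine ⟨hzero, fun j hj => ?_⟩
      rwa [Fin.ext hj]
  · rintro ⟨hgt, hR⟩
    have htR : (t : ℕ) ≤ R := not_lt.mp fun h => ht0 (hgt t h)
    rcases htR.lt_or_eq with h | h
    · exact Or.inl h
    · exact Or.inr ⟨h, hR t h⟩

lemma card_piFinset_lt_eq_gt {n : ℕ} (c : Finset F) (R : ℕ) :
    (Fintype.piFinset fun j : Fin n =>
        if (j : ℕ) < R then univ else if (j : ℕ) = R then c else {0}).card =
      Fintype.card F ^ min R n * if R < n then c.card else 1 := by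
  have hcard : ∀ j : ℕ, (if j < R then (univ : Finset F) else if j = R then c else {0}).card =
      (if j < R then Fintype.card F else 1) * (if j = R then c.card else 1) := by
    intro j
    rcases lt_trichotomy j R with h | rfl | h
    · simp [h, h.ne]
    · simp
    · simp [h.not_gt, h.ne']
  have hlt : (range n).filter (· < R) = range (min R n) := by
    ext j
    simp only [mem_filter, mem_range, lt_min_iff]
    omega
  rw [Fintype.card_piFinset, Fin.prod_univ_eq_prod_range (fun j => (if j < R then
    (univ : Finset F) else if j = R then c else {0}).card), prod_congr rfl fun j _ => hcard j,
    prod_mul_distrib, prod_ite, prod_const, prod_const, one_pow, mul_one, hlt, card_range,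
    prod_ite_eq' (range n) R fun _ => c.card]
  simp only [mem_range]

lemma card_filter_chainWeight_le {n : ℕ} {w : F → ℕ} (hw : IsWeight w) {S : ℕ}
    (hS : S < Mw w) (R : ℕ) :
    (univ.filter fun u : Fin n → F => chainWeight w u ≤ S + R * Mw w).card =
      Fintype.card F ^ min R n *
        if R < n then (univ.filter fun a : F => w a ≤ S).card else 1 := by
  rw [← card_piFinset_lt_eq_gt]
  congr 1
  ext u
  simp only [mem_filter, mem_univ, true_and, Fintype.mem_piFinset, chainWeight_le_iff hw hS]
  constructor
  · rintro ⟨hgt, hR⟩ j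
    split_ifs with h₁ h₂
    · exact mem_univ _
    · exact mem_filter.mpr ⟨mem_univ _, hR j h₂⟩
    · exact mem_singleton.mpr (hgt j (by omega))
  · intro hu
    refine ⟨fun j hj => ?_, fun j hj => ?_⟩
    · simpa [hj.not_gt, hj.ne'] using hu j
    · simpa [hj] using hu j

lemma card_ballW (w : F → ℕ) {n : ℕ} (x : Fin n → F) (r : ℕ) :
    (ballW w x r).card = (univ.filter fun u : Fin n → F => chainWeight w u ≤ r).card := by
  refine card_equiv (Equiv.subLeft x) fun v => ?_
  rw [ballW, mem_filter, mem_filter]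
  simp only [mem_univ, true_and, Equiv.subLeft_apply, dChain]

lemma card_filter_le_eq_one_add_card_winv {w : F → ℕ} (hw : IsWeight w) (S : ℕ) :
    (univ.filter fun a : F => w a ≤ S).card = 1 + (winv w S).card := by
  have : (univ.filter fun a : F => w a ≤ S) = insert 0 (winv w S) := by
    ext a
    by_cases ha : a = 0 <;> simp [winv, ha, hw.map_zero]
  rw [this, card_insert_of_notMem (by simp [winv]), add_comm]

lemma filter_le_zero_eq_singleton {w : F → ℕ} (hw : IsWeight w) :
    (univ.filter fun a : F => w a ≤ 0) = {0} := by
  ext a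
  simp [hw.1 a]

end ChainBall

theorem stmt2 {F : Type*} [Field F] [Fintype F] {n : ℕ} (hn : 1 ≤ n)
    (w : F → ℕ) (hw : IsWeight w) (S R : ℕ) (hS : S < Mw w) (x : Fin n → F) :
    (0 < S → R ≤ n - 1 →
      (ballW w x (S + R * Mw w)).card = Fintype.card F ^ R * (1 + (winv w S).card)) ∧
    (S = 0 → R ≤ n →
      (ballW w x (S + R * Mw w)).card = Fintype.card F ^ R) := by
  rw [card_ballW, card_filter_chainWeight_le hw hS]
  constructor
  · intro _ hR
    rw [min_eq_left (by omega), if_pos (by omega), card_filter_le_eq_one_add_card_winv hw]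
  · rintro rfl hR
    rw [min_eq_left hR, filter_le_zero_eq_singleton hw, card_singleton, ite_self, mul_one]
end

section
/- Let C ⊆ 𝔽_q^n be a code with |C| ≥ 2. Then C is MDS (i.e., |C| = q^{n − d(C) + 1}) if and only if the balls B_w(c, M_w·(d(C) − 1)) for c ∈ C are pairwise disjoint and their union is all of 𝔽_q^n (i.e., C is perfect). -/
set_option linter.unusedSectionVars false

open scoped Classical

/-!
A vector lies in the chain ball `B_w(x, M_w r)` exactly when `x - v` is supported on the first
`r` coordinates, because a weight is at least `1` and at most `M_w` on nonzero entries. Such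
balls have `q ^ r` elements, and since `ϖ` is ultrametric, balls of radius `M_w (d(C) - 1)`
around distinct codewords are disjoint. The balls therefore tile `𝔽_q^n` exactly when
`|C| q ^ (d(C) - 1) = q ^ n`, i.e. when `C` is MDS.
-/

lemma Finset.forall_exists_mem_iff_card_mul_eq {ι α : Type*} [Fintype α] [DecidableEq α]
    {s : Finset ι} {t : ι → Finset α} {k : ℕ} (ht : (s : Set ι).PairwiseDisjoint t)
    (hk : ∀ i ∈ s, (t i).card = k) :
    (∀ a, ∃ i ∈ s, a ∈ t i) ↔ s.card * k = Fintype.card α := by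
  have hcard : (s.biUnion t).card = s.card * k := by
    rw [Finset.card_biUnion ht, Finset.sum_congr rfl hk, Finset.sum_const, smul_eq_mul]
  rw [← hcard, Finset.card_eq_iff_eq_univ, Finset.eq_univ_iff_forall]
  simp only [Finset.mem_biUnion]

section ChainBalls

variable {F : Type*} [Field F] [Fintype F] {n : ℕ}

lemma rho_le_iff {u : Fin n → F} {r : ℕ} : rho u ≤ r ↔ ∀ j : Fin n, u j ≠ 0 → (j : ℕ) < r := by
  simp only [rho, Finset.sup_le_iff, Finset.mem_filter, Finset.mem_univ, true_and,
    Nat.add_one_le_iff]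

lemma rho_eq_zero_iff {u : Fin n → F} : rho u = 0 ↔ u = 0 := by
  rw [← Nat.le_zero, rho_le_iff, funext_iff]
  simp only [Nat.not_lt_zero, imp_false, not_not, Pi.zero_apply]

lemma rho_sub_le (x y : Fin n → F) : rho (x - y) ≤ max (rho x) (rho y) := by
  refine rho_le_iff.mpr fun j hj => ?_
  by_cases hx : x j = 0
  · have hy : y j ≠ 0 := fun hy => hj (by simp [hx, hy])
    exact lt_max_of_lt_right (rho_le_iff.mp le_rfl j hy)
  · exact lt_max_of_lt_left (rho_le_iff.mp le_rfl j hx)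

lemma exists_rho_eq_succ {u : Fin n → F} (hu : u ≠ 0) :
    ∃ j : Fin n, u j ≠ 0 ∧ rho u = j + 1 := by
  obtain ⟨j, hj⟩ := Function.ne_iff.mp hu
  obtain ⟨i, hi, hmax⟩ := Finset.exists_mem_eq_sup (Finset.univ.filter fun j => u j ≠ 0)
    ⟨j, by simpa using hj⟩ fun j : Fin n => (j : ℕ) + 1
  exact ⟨i, (Finset.mem_filter.mp hi).2, hmax⟩

lemma chainWeight_of_rho_eq_succ (w : F → ℕ) {u : Fin n → F} {j : Fin n}
    (h : rho u = j + 1) : chainWeight w u = w (u j) + j * Mw w := by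
  rw [chainWeight, dif_neg (by omega)]
  congr <;> omega

lemma chainWeight_le_Mw_mul_iff {w : F → ℕ} (hw : IsWeight w) (u : Fin n → F) (r : ℕ) :
    chainWeight w u ≤ Mw w * r ↔ rho u ≤ r := by
  rcases eq_or_ne u 0 with rfl | hu
  · simp [chainWeight, rho_eq_zero_iff.mpr rfl]
  obtain ⟨j, hj, hρ⟩ := exists_rho_eq_succ hu
  rw [chainWeight_of_rho_eq_succ w hρ, hρ]
  have hpos : 1 ≤ w (u j) := Nat.one_le_iff_ne_zero.mpr fun h => hj ((hw.1 _).mp h)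
  have hle : w (u j) ≤ Mw w := Finset.le_sup (Finset.mem_univ _)
  constructor
  · intro h
    by_contra! hr
    nlinarith [Nat.mul_le_mul_left (Mw w) (Nat.le_of_lt_succ hr)]
  · intro h
    nlinarith [Nat.mul_le_mul_left (Mw w) h]

lemma mem_ballW_Mw_mul_iff {w : F → ℕ} (hw : IsWeight w) {x v : Fin n → F} {r : ℕ} :
    v ∈ ballW w x (Mw w * r) ↔ rho (x - v) ≤ r := by
  rw [ballW, Finset.mem_filter, dChain, chainWeight_le_Mw_mul_iff hw]
  exact and_iff_right (Finset.mem_univ v)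

lemma card_filter_rho_le {r : ℕ} (hr : r ≤ n) :
    (Finset.univ.filter fun u : Fin n → F => rho u ≤ r).card = Fintype.card F ^ r := by
  have hpi : (Finset.univ.filter fun u : Fin n → F => rho u ≤ r) =
      Fintype.piFinset fun j : Fin n => if (j : ℕ) < r then Finset.univ else {0} := by
    ext u
    simp only [Finset.mem_filter, Finset.mem_univ, true_and, rho_le_iff, Fintype.mem_piFinset]
    refine forall_congr' fun j => ?_
    split_ifs with hj <;> simp [hj]
  rw [hpi, Fintype.card_piFinset]
  simp only [apply_ite Finset.card, Finset.card_univ, Finset.card_singleton]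
  rw [Finset.prod_ite, Finset.prod_const, Finset.prod_const_one, mul_one,
    Fin.card_filter_val_lt, min_eq_right hr]

lemma card_ballW_Mw_mul {w : F → ℕ} (hw : IsWeight w) (x : Fin n → F) {r : ℕ} (hr : r ≤ n) :
    (ballW w x (Mw w * r)).card = Fintype.card F ^ r := by
  rw [← card_filter_rho_le hr]
  refine Finset.card_nbij' (x - ·) (x - ·) ?_ ?_ (fun v _ => sub_sub_cancel x v)
    (fun u _ => sub_sub_cancel x u)
  · intro v hv
    simpa using (mem_ballW_Mw_mul_iff hw).mp hv
  · intro u hu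
    simpa [mem_ballW_Mw_mul_iff hw] using hu

end ChainBalls

section MinimumDistance

variable {F : Type*} [Field F] [Fintype F] {n : ℕ}

lemma dP_le_rho_sub {C : Finset (Fin n → F)} {x y : Fin n → F} (hx : x ∈ C) (hy : y ∈ C)
    (hxy : x ≠ y) : dP C ≤ rho (x - y) :=
  Nat.sInf_le ⟨x, hx, y, hy, hxy, rfl⟩

lemma exists_rho_sub_eq_dP {C : Finset (Fin n → F)} (hC : 1 < C.card) :
    ∃ x ∈ C, ∃ y ∈ C, x ≠ y ∧ rho (x - y) = dP C := by
  obtain ⟨x, hx, y, hy, hxy⟩ := Finset.one_lt_card.mp hC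
  exact Nat.sInf_mem (s := {s | ∃ x ∈ C, ∃ y ∈ C, x ≠ y ∧ rho (x - y) = s})
    ⟨_, x, hx, y, hy, hxy, rfl⟩

lemma one_le_dP {C : Finset (Fin n → F)} (hC : 1 < C.card) : 1 ≤ dP C := by
  obtain ⟨x, -, y, -, hxy, hd⟩ := exists_rho_sub_eq_dP hC
  rw [← hd, Nat.one_le_iff_ne_zero, Ne, rho_eq_zero_iff, sub_eq_zero]
  exact hxy

lemma dP_le {C : Finset (Fin n → F)} (hC : 1 < C.card) : dP C ≤ n := by
  obtain ⟨x, -, y, -, -, hd⟩ := exists_rho_sub_eq_dP hC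
  exact hd ▸ rho_le _

lemma pairwiseDisjoint_ballW {w : F → ℕ} (hw : IsWeight w) (C : Finset (Fin n → F)) :
    (C : Set (Fin n → F)).PairwiseDisjoint fun c => ballW w c (Mw w * (dP C - 1)) := by
  intro c hc c' hc' hne
  refine Finset.disjoint_left.mpr fun v hv hv' => ?_
  have hdist : rho (c - c') ≤ dP C - 1 := by
    rw [← sub_sub_sub_cancel_right c c' v]
    exact (rho_sub_le _ _).trans
      (max_le ((mem_ballW_Mw_mul_iff hw).mp hv) ((mem_ballW_Mw_mul_iff hw).mp hv'))
  have hmin := dP_le_rho_sub hc hc' hne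
  have hzero : rho (c - c') = 0 := by omega
  exact hne (sub_eq_zero.mp (rho_eq_zero_iff.mp hzero))

end MinimumDistance

theorem stmt4_general {F : Type*} [Field F] [Fintype F] {n : ℕ}
    (w : F → ℕ) (hw : IsWeight w) (C : Finset (Fin n → F)) (hC : 2 ≤ C.card) :
    C.card = Fintype.card F ^ (n - dP C + 1) ↔
      ((∀ c ∈ C, ∀ c' ∈ C, c ≠ c' →
          Disjoint (ballW w c (Mw w * (dP C - 1))) (ballW w c' (Mw w * (dP C - 1)))) ∧
        (∀ v : Fin n → F, ∃ c ∈ C, v ∈ ballW w c (Mw w * (dP C - 1)))) := by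
  have hd₁ : 1 ≤ dP C := one_le_dP hC
  have hdn : dP C ≤ n := dP_le hC
  have hdisj := pairwiseDisjoint_ballW hw C
  have hsplit : Fintype.card F ^ n =
      Fintype.card F ^ (n - dP C + 1) * Fintype.card F ^ (dP C - 1) := by
    rw [← pow_add]
    congr 1
    omega
  calc C.card = Fintype.card F ^ (n - dP C + 1)
        ↔ C.card * Fintype.card F ^ (dP C - 1) = Fintype.card (Fin n → F) := by
          rw [Fintype.card_fun, Fintype.card_fin, hsplit,
            Nat.mul_left_inj (pow_ne_zero _ Fintype.card_ne_zero)]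
    _ ↔ ∀ v : Fin n → F, ∃ c ∈ C, v ∈ ballW w c (Mw w * (dP C - 1)) :=
          (Finset.forall_exists_mem_iff_card_mul_eq hdisj
            fun c _ => card_ballW_Mw_mul hw c (by omega)).symm
    _ ↔ _ := (and_iff_right hdisj).symm

theorem stmt4 {F : Type*} [Field F] [Fintype F] {n : ℕ} (hn : 1 ≤ n)
    (w : F → ℕ) (hw : IsWeight w) (C : Finset (Fin n → F)) (hC : 2 ≤ C.card) :
    C.card = Fintype.card F ^ (n - dP C + 1) ↔
      ((∀ c ∈ C, ∀ c' ∈ C, c ≠ c' →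
          Disjoint (ballW w c (Mw w * (dP C - 1))) (ballW w c' (Mw w * (dP C - 1)))) ∧
        (∀ v : Fin n → F, ∃ c ∈ C, v ∈ ballW w c (Mw w * (dP C - 1)))) :=
  stmt4_general w hw C hC
end

section
/- Let S be an integer with m_w < S < M_w and S = w(a) for some a ∈ 𝔽_q, let W^w(S) ⊆ 𝔽_q be a set of maximal cardinality such that w(a − b) ≥ S for all distinct a, b ∈ W^w(S) and w(a − b) = S for some a, b ∈ W^w(S) (such a set has at least two elements), and let 1 ≤ R ≤ n. Then the code C = {(c_1,…,c_n) ∈ 𝔽_q^n : c_1 = ⋯ = c_{R−1} = 0 and c_R ∈ W^w(S)} has cardinality |C| = q^{n−R} · |W^w(S)| and minimum distance d_w(C) = S + (R − 1)·M_w. -/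
set_option linter.unusedSectionVars false

open scoped Classical

section Aux16

variable {F : Type*} [Field F] [Fintype F]

lemma rho_ge_of_ne' {n : ℕ} (u : Fin n → F) (j : Fin n) (hj : u j ≠ 0) :
    (j : ℕ) + 1 ≤ rho u := by
  unfold rho
  exact Finset.le_sup (f := fun j : Fin n => (j : ℕ) + 1)
    (Finset.mem_filter.2 ⟨Finset.mem_univ j, hj⟩)

lemma rho_last_ne' {n : ℕ} (u : Fin n → F) (h : rho u ≠ 0) (hlt : rho u - 1 < n) :
    u ⟨rho u - 1, hlt⟩ ≠ 0 := by
  have hne : (Finset.univ.filter fun j => u j ≠ 0).Nonempty := by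
    by_contra hc
    rw [Finset.not_nonempty_iff_eq_empty] at hc
    simp [rho, hc] at h
  obtain ⟨j, hj, hje⟩ := Finset.exists_mem_eq_sup _ hne (fun j : Fin n => (j : ℕ) + 1)
  have hju : u j ≠ 0 := by simpa using hj
  have he : rho u = (j : ℕ) + 1 := hje
  have : (⟨rho u - 1, hlt⟩ : Fin n) = j := by ext; simp [he]
  rwa [this]

lemma chainWeight_eq' {n : ℕ} (w : F → ℕ) (u : Fin n → F) (m : ℕ) (hm : rho u = m)
    (h0 : m ≠ 0) (hlt : m - 1 < n) :
    chainWeight w u = w (u ⟨m - 1, hlt⟩) + (m - 1) * Mw w := by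
  subst hm; rw [chainWeight, dif_neg h0]

end Aux16

set_option maxHeartbeats 1000000 in
theorem stmt16 {F : Type*} [Field F] [Fintype F] {n : ℕ} (hn : 1 ≤ n)
    (w : F → ℕ) (hw : IsWeight w) (S : ℕ)
    (hmS : mw w < S) (hS : S < Mw w) (hSval : ∃ a : F, w a = S)
    (K : Finset F)
    (hK1 : ∀ a ∈ K, ∀ b ∈ K, a ≠ b → S ≤ w (a - b))
    (hK2 : ∃ a ∈ K, ∃ b ∈ K, w (a - b) = S)
    (hKmax : ∀ K' : Finset F,
      (∀ a ∈ K', ∀ b ∈ K', a ≠ b → S ≤ w (a - b)) →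
      (∃ a ∈ K', ∃ b ∈ K', w (a - b) = S) → K'.card ≤ K.card)
    (R : ℕ) (hR1 : 1 ≤ R) (hRn : R ≤ n) :
    let C : Finset (Fin n → F) := Finset.univ.filter fun c : Fin n → F =>
      (∀ j : Fin n, (j : ℕ) + 1 < R → c j = 0) ∧ c ⟨R - 1, by omega⟩ ∈ K
    C.card = Fintype.card F ^ (n - R) * K.card ∧
      dW w C = S + (R - 1) * Mw w := by
  intro C
  have hS1 : 1 ≤ S := by omega
  have hMwS : S + 1 ≤ Mw w := hS
  have hmemC : ∀ c : Fin n → F, c ∈ C ↔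
      (∀ j : Fin n, (j : ℕ) + 1 < R → c j = 0) ∧ c ⟨R - 1, by omega⟩ ∈ K := by
    intro c; simp [C]
  constructor
  · -- cardinality
    have hbij : C.card = (K ×ˢ (Finset.univ : Finset (Fin (n - R) → F))).card := by
      refine Finset.card_bij'
        (fun c _ => (c ⟨R - 1, by omega⟩,
          fun k : Fin (n - R) => c ⟨R + (k : ℕ), by have := k.isLt; omega⟩))
        (fun p _ => fun j : Fin n =>
          if h1 : (j : ℕ) + 1 < R then 0
          else if h2 : (j : ℕ) = R - 1 then p.1
          else p.2 ⟨(j : ℕ) - R, by have := j.isLt; omega⟩) ?_ ?_ ?_ ?_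
      · intro c hc
        obtain ⟨h1, h2⟩ := (hmemC c).1 hc
        exact Finset.mem_product.2 ⟨h2, Finset.mem_univ _⟩
      · intro p hp
        rw [hmemC]
        constructor
        · intro j hj; simp [dif_pos hj]
        · have h1 : ¬ ((R : ℕ) - 1 + 1 < R) := by omega
          simp only [dif_neg h1]
          rw [dif_pos trivial]
          exact (Finset.mem_product.1 hp).1
      · intro c hc
        obtain ⟨h1, h2⟩ := (hmemC c).1 hc
        funext j
        beta_reduce
        by_cases hj1 : (j : ℕ) + 1 < R
        · rw [dif_pos hj1]; exact (h1 j hj1).symm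
        · rw [dif_neg hj1]
          by_cases hj2 : (j : ℕ) = R - 1
          · have hjeq : j = (⟨R - 1, by omega⟩ : Fin n) := Fin.ext hj2
            rw [dif_pos hj2, hjeq]
          · rw [dif_neg hj2]
            have hjv : R + ((j : ℕ) - R) = (j : ℕ) := by omega
            simp only [hjv, Fin.eta]
      · intro p hp
        beta_reduce
        ext
        · have h1 : ¬ ((R : ℕ) - 1 + 1 < R) := by omega
          simp only [dif_neg h1, dif_pos trivial]
        · rename_i k
          have hk := k.isLt
          have h1 : ¬ (R + (k : ℕ) + 1 < R) := by omega
          have h2 : ¬ (R + (k : ℕ) = R - 1) := by omega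
          simp only [dif_neg h1, dif_neg h2]
          have hkv : R + (k : ℕ) - R = (k : ℕ) := by omega
          simp only [Fin.val_mk, hkv, Fin.eta]
    rw [hbij, Finset.card_product, Finset.card_univ, Fintype.card_fun, Fintype.card_fin]
    ring
  · -- minimum distance
    obtain ⟨a, ha, b, hb, hab⟩ := hK2
    have habne : a ≠ b := by
      intro h
      rw [h, sub_self] at hab
      have := (hw.1 0).2 rfl
      omega
    set x : Fin n → F := fun j => if (j : ℕ) = R - 1 then a else 0 with hxdef
    set y : Fin n → F := fun j => if (j : ℕ) = R - 1 then b else 0 with hydef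
    have hxC : x ∈ C := by
      rw [hmemC]
      refine ⟨fun j hj => ?_, ?_⟩
      · have hne : (j : ℕ) ≠ R - 1 := by omega
        simp [hxdef, hne]
      · simp [hxdef, ha]
    have hyC : y ∈ C := by
      rw [hmemC]
      refine ⟨fun j hj => ?_, ?_⟩
      · have hne : (j : ℕ) ≠ R - 1 := by omega
        simp [hydef, hne]
      · simp [hydef, hb]
    have hu : ∀ j : Fin n, (x - y) j = if (j : ℕ) = R - 1 then a - b else 0 := by
      intro j
      by_cases h : (j : ℕ) = R - 1 <;> simp [hxdef, hydef, h]
    have habz : a - b ≠ 0 := sub_ne_zero.2 habne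
    have hrho : rho (x - y) = R := by
      apply le_antisymm
      · apply Finset.sup_le
        intro j hj
        have hju : (x - y) j ≠ 0 := by simpa using hj
        rw [hu j] at hju
        by_cases h : (j : ℕ) = R - 1
        · omega
        · simp [h] at hju
      · have hge := rho_ge_of_ne' (x - y) ⟨R - 1, by omega⟩ (by rw [hu]; simpa using habz)
        simp only [Fin.val_mk] at hge
        omega
    have hdxy : dChain w x y = S + (R - 1) * Mw w := by
      rw [dChain, chainWeight_eq' w (x - y) R hrho (by omega) (by omega), hu]
      simp [hab]
    have hxyne : x ≠ y := by
      intro h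
      have h2 := congrFun h ⟨R - 1, by omega⟩
      simp [hxdef, hydef] at h2
      exact habne h2
    rw [dW]
    apply le_antisymm
    · exact Nat.sInf_le (show _ ∈ {s | ∃ x ∈ C, ∃ y ∈ C, x ≠ y ∧ dChain w x y = s} from
        ⟨x, hxC, y, hyC, hxyne, hdxy⟩)
    · apply le_csInf ⟨_, show _ ∈ {s | ∃ x ∈ C, ∃ y ∈ C, x ≠ y ∧ dChain w x y = s} from
        ⟨x, hxC, y, hyC, hxyne, hdxy⟩⟩
      rintro s ⟨x', hx', y', hy', hne, rfl⟩
      set u : Fin n → F := x' - y' with hudef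
      obtain ⟨h1x, h2x⟩ := (hmemC x').1 hx'
      obtain ⟨h1y, h2y⟩ := (hmemC y').1 hy'
      obtain ⟨j0, hj0⟩ := Function.ne_iff.1 hne
      have hj0u : u j0 ≠ 0 := sub_ne_zero.2 hj0
      have hzero : ∀ j : Fin n, (j : ℕ) + 1 < R → u j = 0 := fun j hj => by
        simp [hudef, h1x j hj, h1y j hj]
      have hj0R : R ≤ (j0 : ℕ) + 1 := by
        by_contra hc
        exact hj0u (hzero j0 (by omega))
      have hrhoR : R ≤ rho u := le_trans hj0R (rho_ge_of_ne' u j0 hj0u)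
      have hrhon : rho u ≤ n := rho_le u
      set m := rho u with hm
      have h0 : m ≠ 0 := by omega
      have hlt : m - 1 < n := by omega
      have hlast : u ⟨m - 1, hlt⟩ ≠ 0 := rho_last_ne' u h0 hlt
      have hgoal : S + (R - 1) * Mw w ≤ w (u ⟨m - 1, hlt⟩) + (m - 1) * Mw w := by
        by_cases hcase : m = R
        · have hidx : (⟨m - 1, hlt⟩ : Fin n) = ⟨R - 1, by omega⟩ := by
            ext; simp [hcase]
          have e1 : u ⟨m - 1, hlt⟩ = x' ⟨R - 1, by omega⟩ - y' ⟨R - 1, by omega⟩ := by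
            rw [hidx]; rfl
          have hne2 : x' ⟨R - 1, by omega⟩ ≠ y' ⟨R - 1, by omega⟩ :=
            sub_ne_zero.1 (e1 ▸ hlast)
          have hwS : S ≤ w (u ⟨m - 1, hlt⟩) := by
            rw [e1]; exact hK1 _ h2x _ h2y hne2
          exact Nat.add_le_add hwS (le_of_eq (by rw [hcase]))
        · have hmR : R + 1 ≤ m := by omega
          have hmul : R * Mw w ≤ (m - 1) * Mw w :=
            Nat.mul_le_mul_right _ (by omega)
          have hsplit : (R - 1) * Mw w + Mw w = R * Mw w := by
            calc (R - 1) * Mw w + Mw w = ((R - 1) + 1) * Mw w := (Nat.succ_mul _ _).symm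
              _ = R * Mw w := by congr 1; omega
          calc S + (R - 1) * Mw w ≤ Mw w + (R - 1) * Mw w :=
                Nat.add_le_add_right (by omega) _
            _ = R * Mw w := by rw [Nat.add_comm, hsplit]
            _ ≤ (m - 1) * Mw w := hmul
            _ ≤ w (u ⟨m - 1, hlt⟩) + (m - 1) * Mw w := Nat.le_add_left _ _
      calc S + (R - 1) * Mw w ≤ w (u ⟨m - 1, hlt⟩) + (m - 1) * Mw w := hgoal
        _ = chainWeight w u := (chainWeight_eq' w u m hm.symm h0 hlt).symm
        _ = dChain w x' y' := by rw [dChain, ← hudef]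
end
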